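/- (Correctness of zonotope order reduction.) Let c ∈ ℝ^n and G ∈ ℝ^{n×r}, and partition G = [H_T H_R] where H_T ∈ ℝ^{n×p} consists of the first p columns of G and H_R ∈ ℝ^{n×(r−p)} of the remaining columns. Define the diagonal matrix Q ∈ ℝ^{n×n} with Q_{ii} := Σ_{j=1}^{r−p} |H_R(i,j)|. Then c ⊕ G B^r ⊆ c ⊕ [H_T Q] B^{p+n}; i.e., the reduced zonotope of order p+n contains the original zonotope of order r. -/

import Mathlib

open Matrix

/-
Split the coefficient vector of `[H_T  H_R]` into its two blocks. The `H_T` block is kept, and the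
point `v = H_R b` contributed by the other block satisfies `|v i| ≤ Σ_j |H_R(i,j)| = Q_ii`, so
`v = Q b'` with `b' i = v i / Q_ii` in the unit box (and `b' i = 0` where `Q_ii = 0`, since then
`v i = 0` as well).
-/

/-- The zonotope with center `c` and generator matrix `G`:
`c ⊕ G B^r = {c + G b : b ∈ [-1,1]^r}`. -/
def zonotope {n : ℕ} {ι : Type*} [Fintype ι] (c : Fin n → ℝ)
    (G : Matrix (Fin n) ι ℝ) : Set (Fin n → ℝ) :=
  {x | ∃ b : ι → ℝ, (∀ j, |b j| ≤ 1) ∧ x = c + G.mulVec b}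

theorem abs_mulVec_le_sum_abs {m ι : Type*} [Fintype ι] (M : Matrix m ι ℝ) {b : ι → ℝ}
    (hb : ∀ j, |b j| ≤ 1) (i : m) : |(M *ᵥ b) i| ≤ ∑ j, |M i j| :=
  calc |∑ j, M i j * b j| ≤ ∑ j, |M i j * b j| := Finset.abs_sum_le_sum_abs _ _
    _ ≤ ∑ j, |M i j| := Finset.sum_le_sum fun j _ => by
      rw [abs_mul]
      exact mul_le_of_le_one_right (abs_nonneg _) (hb j)

theorem mem_zonotope_zero_diagonal {n : ℕ} {d v : Fin n → ℝ} (hv : ∀ i, |v i| ≤ d i) :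
    v ∈ zonotope 0 (diagonal d) := by
  refine ⟨fun i => v i / d i, fun i => ?_, ?_⟩
  · rw [abs_div]
    exact div_le_one_of_le₀ ((hv i).trans (le_abs_self _)) (abs_nonneg _)
  · ext i
    rcases eq_or_ne (d i) 0 with hd | hd
    · simpa [mulVec_diagonal, hd] using hv i
    · simp [mulVec_diagonal, mul_div_cancel₀ _ hd]

theorem mem_zonotope_fromCols_iff {n : ℕ} {ι κ : Type*} [Fintype ι] [Fintype κ]
    {c x : Fin n → ℝ} {A : Matrix (Fin n) ι ℝ} {B : Matrix (Fin n) κ ℝ} :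
    x ∈ zonotope c (fromCols A B) ↔
      ∃ a ∈ zonotope 0 A, ∃ b ∈ zonotope 0 B, x = c + a + b := by
  constructor
  · rintro ⟨b, hb, rfl⟩
    refine ⟨A *ᵥ (b ∘ Sum.inl), ⟨_, fun j => hb (.inl j), (zero_add _).symm⟩,
      B *ᵥ (b ∘ Sum.inr), ⟨_, fun j => hb (.inr j), (zero_add _).symm⟩, ?_⟩
    rw [← Sum.elim_comp_inl_inr b, fromCols_mulVec_sumElim, add_assoc]
    rfl
  · rintro ⟨_, ⟨a, ha, rfl⟩, _, ⟨b, hb, rfl⟩, rfl⟩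
    refine ⟨Sum.elim a b, Sum.forall.2 ⟨ha, hb⟩, ?_⟩
    simp [add_assoc]

theorem zonotope_fromCols_subset_fromCols {n : ℕ} {ι κ κ' : Type*} [Fintype ι] [Fintype κ]
    [Fintype κ'] (c : Fin n → ℝ) (A : Matrix (Fin n) ι ℝ) {B : Matrix (Fin n) κ ℝ}
    {B' : Matrix (Fin n) κ' ℝ} (h : zonotope 0 B ⊆ zonotope 0 B') :
    zonotope c (fromCols A B) ⊆ zonotope c (fromCols A B') := by
  intro x hx
  obtain ⟨a, ha, b, hb, rfl⟩ := mem_zonotope_fromCols_iff.1 hx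
  exact mem_zonotope_fromCols_iff.2 ⟨a, ha, b, h hb, rfl⟩

/-- Correctness of zonotope order reduction: partitioning `G = [H_T  H_R]` and
replacing `H_R` by the diagonal matrix `Q` with `Q_{ii} = Σ_j |H_R(i,j)|` yields
a lower-order zonotope containing the original one. -/
theorem zonotope_order_reduction (n p q : ℕ) (c : Fin n → ℝ)
    (HT : Matrix (Fin n) (Fin p) ℝ) (HR : Matrix (Fin n) (Fin q) ℝ) :
    zonotope c (Matrix.fromCols HT HR) ⊆
      zonotope c (Matrix.fromCols HT
        (Matrix.diagonal fun i => ∑ j, |HR i j|)) := by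
  refine zonotope_fromCols_subset_fromCols c HT ?_
  rintro _ ⟨b, hb, rfl⟩
  rw [zero_add]
  exact mem_zonotope_zero_diagonal (abs_mulVec_le_sum_abs HR hb)
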